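/- The MPW solution satisfies balanced contributions: for every TUX game w on N and all players i, j ∈ N, MPW_i(w) − MPW_i(w_{−j}) = MPW_j(w) − MPW_j(w_{−i}). -/

import Mathlib

open Finset BigOperators

namespace TUX

/-- A (raw) game in partition function form: assigns a real worth to each
coalition together with a partition (of the outside players). -/
abbrev Game := Finset ℕ → Finset (Finset ℕ) → ℝ

/-- A TU game (characteristic function). -/
abbrev TUGame := Finset ℕ → ℝ

/-- A solution for TUX games: given a player set and a game, assigns payoffs. -/
abbrev Sol := Finset ℕ → Game → ℕ → ℝ

/-- `w` is a genuine TUX game: the empty coalition has worth 0. -/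
def IsTUX (w : Game) : Prop := ∀ π, w ∅ π = 0

/-- `π` is a partition of the finite set `M`. -/
def IsPartition (M : Finset ℕ) (π : Finset (Finset ℕ)) : Prop :=
  (∀ B ∈ π, B ⊆ M) ∧ ∅ ∉ π ∧ ∀ x ∈ M, (π.filter (fun B => x ∈ B)).card = 1

instance (M : Finset ℕ) : DecidablePred (IsPartition M) := fun π => by
  unfold IsPartition; infer_instance

/-- The finite set of all partitions of `M`. -/
def partitionsOf (M : Finset ℕ) : Finset (Finset (Finset ℕ)) :=
  (M.powerset.powerset).filter (IsPartition M)

/-- The Ewens(θ = 1) probability of the partition `π` of `M`: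
`p*_M(π) = ∏_{B ∈ π} (|B| - 1)! / |M|!`. -/
noncomputable def pstar (M : Finset ℕ) (π : Finset (Finset ℕ)) : ℝ :=
  (∏ B ∈ π, ((B.card - 1).factorial : ℝ)) / (M.card.factorial : ℝ)

/-- The block of `π` containing `j` (junk if `π` is not a partition containing `j`). -/
def blockOf (π : Finset (Finset ℕ)) (j : ℕ) : Finset ℕ :=
  (π.filter (fun B => j ∈ B)).sup id

/-- Add player `i` to the block `B` of `π`. -/
def addToBlock (π : Finset (Finset ℕ)) (i : ℕ) (B : Finset ℕ) : Finset (Finset ℕ) :=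
  insert (insert i B) (π.erase B)

/-- The restriction operator `r⋆` removing a single player `i` from a game on `N`:
`w₋ᵢ(S,π) = (1/(n-s)) (w(S, π₊ᵢ⇝∅) + ∑_{j ∈ N∖(S∪{i})} w(S, π₊ᵢ⇝π(j)))`. -/
noncomputable def restrict1 (N : Finset ℕ) (w : Game) (i : ℕ) : Game :=
  fun S π =>
    ((N.card : ℝ) - (S.card : ℝ))⁻¹ *
      (w S (insert {i} π) + ∑ j ∈ (N \ S).erase i, w S (addToBlock π i (blockOf π j)))

/-- Iterated removal of a list of players. -/
noncomputable def restrictL : Finset ℕ → Game → List ℕ → Game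
  | _, w, [] => w
  | N, w, i :: l => restrictL (N.erase i) (restrict1 N w i) l

/-- Removal of a set of players (via the increasing enumeration; by path
independence of `r⋆` the order is immaterial). -/
noncomputable def restrictSet (N : Finset ℕ) (w : Game) (T : Finset ℕ) : Game :=
  restrictL N w (T.sort (· ≤ ·))

/-- The average TU game `v̄_w` of a TUX game `w` on `N`. -/
noncomputable def avg (N : Finset ℕ) (w : Game) : TUGame :=
  fun S => ∑ π ∈ partitionsOf (N \ S), pstar (N \ S) π * w S π

/-- The auxiliary TU game `v*_w(S) = w₋(N∖S)(S,∅)`. -/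
noncomputable def auxGame (N : Finset ℕ) (w : Game) : TUGame :=
  fun S => restrictSet N w (N \ S) S ∅

/-- The Shapley value of a TU game on player set `N`. -/
noncomputable def shapley (N : Finset ℕ) (v : TUGame) (i : ℕ) : ℝ :=
  ∑ S ∈ (N.erase i).powerset,
    (((S.card.factorial : ℝ) * ((N.card - S.card - 1).factorial : ℝ)) / (N.card.factorial : ℝ)) *
      (v (insert i S) - v S)

/-- The MPW solution: the Shapley value of the average game. -/
noncomputable def MPW (N : Finset ℕ) (w : Game) (i : ℕ) : ℝ := shapley N (avg N w) i

/-- The MPW solution as a solution for TUX games. -/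
noncomputable def MPWsol : Sol := fun N w i => MPW N w i

/-- The scaled Dirac TUX game `δ_{T,τ}` on `N`. -/
noncomputable def scaledDirac (N T : Finset ℕ) (τ : Finset (Finset ℕ)) : Game :=
  fun S π => if S = T ∧ π = τ then (pstar (N \ T) τ)⁻¹ else 0

/-- `τ₋S`: remove the players of `S` from each block of `τ`, discarding empty blocks. -/
def partRemove (τ : Finset (Finset ℕ)) (S : Finset ℕ) : Finset (Finset ℕ) :=
  (τ.image (fun B => B \ S)).erase ∅

/-- The Sobolev-reduced TUX game `w₋ⱼ^{So,φ}` on `N ∖ {j}`. -/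
noncomputable def sobRed (N : Finset ℕ) (φ : Sol) (w : Game) (j : ℕ) : Game :=
  fun S π =>
    ((S.card : ℝ) / ((N.card : ℝ) - 1)) * (w (insert j S) π - φ N w j) +
      (1 - (S.card : ℝ) / ((N.card : ℝ) - 1)) * restrict1 N w j S π

/-- The Hart–Mas-Colell reduced TUX game `w₋T^{HM,φ}` on `N ∖ T`. -/
noncomputable def hmRed (N : Finset ℕ) (φ : Sol) (w : Game) (T : Finset ℕ) : Game :=
  fun S π => w (S ∪ T) π - ∑ j ∈ T, φ (S ∪ T) (restrictSet N w (N \ (S ∪ T))) j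

/-- Efficiency for TUX games. -/
def EfficientX (φ : Sol) : Prop :=
  ∀ (N : Finset ℕ) (w : Game), IsTUX w → ∑ i ∈ N, φ N w i = w N ∅

/-- Balanced contributions for TUX games (w.r.t. the restriction operator `r⋆`). -/
def BalancedContributionsX (φ : Sol) : Prop :=
  ∀ (N : Finset ℕ) (w : Game), IsTUX w → ∀ i ∈ N, ∀ j ∈ N,
    φ N w i - φ (N.erase j) (restrict1 N w j) i
      = φ N w j - φ (N.erase i) (restrict1 N w i) j

/-- 2-standardness for TUX games. -/
def TwoStandardX (φ : Sol) : Prop :=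
  ∀ i j : ℕ, i ≠ j → ∀ w : Game, IsTUX w →
    φ {i, j} w i
      = w {i} {({j} : Finset ℕ)}
        + (w {i, j} ∅ - w {j} {({i} : Finset ℕ)} - w {i} {({j} : Finset ℕ)}) / 2

/-- Sobolev consistency for TUX games. -/
def SobolevConsistentX (φ : Sol) : Prop :=
  ∀ (N : Finset ℕ) (w : Game), IsTUX w → ∀ i ∈ N, ∀ j ∈ N, i ≠ j →
    φ N w i = φ (N.erase j) (sobRed N φ w j) i

/-- Hart–Mas-Colell consistency (single-player removal) for TUX games. -/
def HMConsistentX (φ : Sol) : Prop :=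
  ∀ (N : Finset ℕ) (w : Game), IsTUX w → ∀ i ∈ N, ∀ j ∈ N, i ≠ j →
    φ N w i = φ (N.erase j) (hmRed N φ w {j}) i

/-- Set Hart–Mas-Colell consistency (removal of a coalition) for TUX games. -/
def SetHMConsistentX (φ : Sol) : Prop :=
  ∀ (N : Finset ℕ) (w : Game), IsTUX w → ∀ i ∈ N, ∀ T ⊆ N.erase i,
    φ N w i = φ (N \ T) (hmRed N φ w T) i

/-- The finite set of embedded coalitions `(T,τ)` of `N` with `T ≠ ∅`. -/
def embeddedNE (N : Finset ℕ) : Finset (Finset ℕ × Finset (Finset ℕ)) :=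
  (N.powerset ×ˢ N.powerset.powerset).filter
    (fun p => p.1.Nonempty ∧ IsPartition (N \ p.1) p.2)

end TUX

/-!
Removing `j` by `r⋆` does not change the average game on coalitions of the remaining players:
the Ewens(1) law on partitions of `M ∪ {j}` arises from the law on partitions of `M` by seating
`j` alone or in the block of one of the `|M|` players of `M`, each of these `|M| + 1` choices with
probability `1 / (|M| + 1)` (the Chinese restaurant process), and this is exactly the averaging
performed by `r⋆`. Hence `MPW` of the reduced game is the Shapley value of `v̄_w` on `N ∖ {j}`, and
it remains to see balanced contributions for the Shapley value: `Sh_i(N) − Sh_i(N ∖ {j})` is a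
weighted sum of the second differences `v(T ∪ {i,j}) − v(T ∪ {j}) − v(T ∪ {i}) + v(T)`, which are
symmetric in `i` and `j`.
-/

namespace TUX

section Partitions

variable {M : Finset ℕ} {π σ : Finset (Finset ℕ)} {B C : Finset ℕ} {j x : ℕ}

lemma mem_partitionsOf : π ∈ partitionsOf M ↔ IsPartition M π := by
  simp only [partitionsOf, mem_filter, mem_powerset, and_iff_right_iff_imp]
  exact fun h B hB => mem_powerset.2 (h.1 B hB)

lemma isPartition_iff :
    IsPartition M π ↔ (∀ B ∈ π, B ⊆ M) ∧ ∅ ∉ π ∧ (∀ x ∈ M, ∃ B ∈ π, x ∈ B) ∧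
      (π : Set (Finset ℕ)).PairwiseDisjoint id := by
  refine and_congr_right fun hsub => and_congr_right fun _ => ⟨fun h => ⟨fun x hx => ?_, ?_⟩, ?_⟩
  · obtain ⟨B, hB⟩ := card_eq_one.1 (h x hx)
    exact ⟨B, mem_filter.1 (hB ▸ mem_singleton_self B)⟩
  · intro B hB C hC hBC
    refine disjoint_left.2 fun x hxB hxC => hBC ?_
    exact card_le_one.1 (h x (hsub B hB hxB)).le B (mem_filter.2 ⟨hB, hxB⟩) C
      (mem_filter.2 ⟨hC, hxC⟩)
  · rintro ⟨hcover, hdisj⟩ x hx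
    obtain ⟨B, hB, hxB⟩ := hcover x hx
    refine card_eq_one.2 ⟨B, eq_singleton_iff_unique_mem.2 ⟨mem_filter.2 ⟨hB, hxB⟩, ?_⟩⟩
    intro C hC
    obtain ⟨hC, hxC⟩ := mem_filter.1 hC
    by_contra hne
    exact disjoint_left.1 (hdisj hC hB hne) hxC hxB

lemma IsPartition.disjoint (h : IsPartition M π) (hB : B ∈ π) (hC : C ∈ π) (hBC : B ≠ C) :
    Disjoint B C :=
  (isPartition_iff.1 h).2.2.2 hB hC hBC

lemma IsPartition.eq_of_mem (h : IsPartition M π) (hB : B ∈ π) (hC : C ∈ π) (hxB : x ∈ B)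
    (hxC : x ∈ C) : B = C := by
  by_contra hne
  exact disjoint_left.1 (h.disjoint hB hC hne) hxB hxC

lemma blockOf_eq (h : IsPartition M π) (hB : B ∈ π) (hxB : x ∈ B) : blockOf π x = B := by
  have hfilter : π.filter (fun C => x ∈ C) = {B} :=
    eq_singleton_iff_unique_mem.2 ⟨mem_filter.2 ⟨hB, hxB⟩,
      fun C hC => h.eq_of_mem (mem_filter.1 hC).1 hB (mem_filter.1 hC).2 hxB⟩
  rw [blockOf, hfilter, sup_singleton, id]

lemma blockOf_mem_and_mem (h : IsPartition M π) (hx : x ∈ M) :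
    blockOf π x ∈ π ∧ x ∈ blockOf π x := by
  obtain ⟨B, hB, hxB⟩ := (isPartition_iff.1 h).2.2.1 x hx
  rw [blockOf_eq h hB hxB]
  exact ⟨hB, hxB⟩

lemma sum_blockOf {β : Type*} [AddCommMonoid β] (h : IsPartition M π) (f : Finset ℕ → β) :
    ∑ x ∈ M, f (blockOf π x) = ∑ B ∈ π, B.card • f B := by
  rw [← sum_fiberwise_of_maps_to (fun x hx => (blockOf_mem_and_mem h hx).1)]
  refine sum_congr rfl fun B hB => ?_
  have hfiber : M.filter (fun x => blockOf π x = B) = B := by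
    ext x
    simp only [mem_filter]
    exact ⟨fun ⟨hx, hxB⟩ => hxB ▸ (blockOf_mem_and_mem h hx).2,
      fun hxB => ⟨h.1 B hB hxB, blockOf_eq h hB hxB⟩⟩
  rw [hfiber, sum_congr rfl fun x hx => by rw [blockOf_eq h hB hx], sum_const]

lemma IsPartition.subset_of_mem_insert_empty (h : IsPartition M π) (hB : B ∈ insert ∅ π) :
    B ⊆ M := by
  rcases mem_insert.1 hB with rfl | hB
  exacts [empty_subset M, h.1 B hB]

lemma addToBlock_empty (h0 : ∅ ∉ π) : addToBlock π j ∅ = insert {j} π := by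
  rw [addToBlock, erase_eq_of_notMem h0, insert_empty]

lemma isPartition_addToBlock (hjM : j ∉ M) (h : IsPartition M π) (hB : B ∈ insert ∅ π) :
    IsPartition (insert j M) (addToBlock π j B) := by
  have hBM : B ⊆ M := h.subset_of_mem_insert_empty hB
  obtain ⟨hsub, h0, hcover, hdisj⟩ := isPartition_iff.1 h
  refine isPartition_iff.2 ⟨?_, ?_, ?_, ?_⟩
  · intro C hC
    rcases mem_insert.1 hC with rfl | hC
    exacts [insert_subset_insert j hBM, (hsub C (mem_of_mem_erase hC)).trans (subset_insert j M)]
  · rw [addToBlock, mem_insert, not_or]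
    exact ⟨(insert_ne_empty j B).symm, fun hc => h0 (mem_of_mem_erase hc)⟩
  · intro x hx
    rcases mem_insert.1 hx with rfl | hx
    · exact ⟨insert x B, mem_insert_self _ _, mem_insert_self x B⟩
    obtain ⟨C, hC, hxC⟩ := hcover x hx
    by_cases hCB : C = B
    · exact ⟨insert j B, mem_insert_self _ _, mem_insert_of_mem (hCB ▸ hxC)⟩
    · exact ⟨C, mem_insert_of_mem (mem_erase.2 ⟨hCB, hC⟩), hxC⟩
  · rw [addToBlock, coe_insert]
    refine (hdisj.subset (coe_subset.2 (erase_subset B π))).insert fun C hC _ => ?_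
    obtain ⟨hCB, hC⟩ := mem_erase.1 hC
    refine disjoint_insert_left.2 ⟨fun hjC => hjM (hsub C hC hjC), ?_⟩
    rcases mem_insert.1 hB with rfl | hB
    exacts [disjoint_empty_left C, h.disjoint hB hC (Ne.symm hCB)]

lemma blockOf_addToBlock (hjM : j ∉ M) (h : IsPartition M π) (hB : B ∈ insert ∅ π) :
    blockOf (addToBlock π j B) j = insert j B :=
  blockOf_eq (isPartition_addToBlock hjM h hB) (mem_insert_self _ _) (mem_insert_self j B)

lemma partRemove_eq (h : IsPartition (insert j M) σ) :
    partRemove σ {j} = (insert ((blockOf σ j).erase j) (σ.erase (blockOf σ j))).erase ∅ := by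
  obtain ⟨hC, hjC⟩ := blockOf_mem_and_mem h (mem_insert_self j M)
  have hrest : (σ.erase (blockOf σ j)).image (fun D => D \ {j}) = σ.erase (blockOf σ j) := by
    refine (image_congr fun D hD => ?_).trans image_id
    rw [sdiff_singleton_eq_erase, id, erase_eq_self]
    intro hjD
    obtain ⟨hne, hD⟩ := mem_erase.1 (mem_coe.1 hD)
    exact hne (h.eq_of_mem hD hC hjD hjC)
  rw [partRemove]
  conv_lhs => rw [← insert_erase hC]
  rw [image_insert, hrest, sdiff_singleton_eq_erase]

lemma partRemove_addToBlock (hjM : j ∉ M) (h : IsPartition M π) (hB : B ∈ insert ∅ π) :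
    partRemove (addToBlock π j B) {j} = π := by
  have hjB : j ∉ B := fun hjB => hjM (h.subset_of_mem_insert_empty hB hjB)
  have hnew : insert j B ∉ π.erase B :=
    fun hc => hjM (h.1 _ (mem_of_mem_erase hc) (mem_insert_self j B))
  rw [partRemove_eq (isPartition_addToBlock hjM h hB), blockOf_addToBlock hjM h hB,
    erase_insert hjB, addToBlock, erase_insert hnew]
  rcases mem_insert.1 hB with rfl | hB
  · rw [erase_insert_eq_erase, erase_eq_of_notMem h.2.1, erase_eq_of_notMem h.2.1]
  · rw [insert_erase hB, erase_eq_of_notMem h.2.1]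

lemma isPartition_partRemove (hjM : j ∉ M) (h : IsPartition (insert j M) σ) :
    IsPartition M (partRemove σ {j}) := by
  obtain ⟨hC, hjC⟩ := blockOf_mem_and_mem h (mem_insert_self j M)
  obtain ⟨hsub, -, hcover, hdisj⟩ := isPartition_iff.1 h
  rw [partRemove_eq h]
  set C := blockOf σ j
  refine isPartition_iff.2 ⟨fun D hD => ?_, notMem_erase ∅ _, fun x hx => ?_, ?_⟩
  · rcases mem_insert.1 (mem_of_mem_erase hD) with rfl | hD
    · rw [← erase_insert hjM]
      exact erase_subset_erase j (hsub C hC)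
    · obtain ⟨hDC, hD⟩ := mem_erase.1 hD
      refine (subset_insert_iff_of_notMem fun hjD => hDC ?_).1 (hsub D hD)
      exact h.eq_of_mem hD hC hjD hjC
  · have hxj : x ≠ j := fun hxj => hjM (hxj ▸ hx)
    obtain ⟨D, hD, hxD⟩ := hcover x (mem_insert_of_mem hx)
    by_cases hDC : D = C
    · have hxC : x ∈ C.erase j := mem_erase.2 ⟨hxj, hDC ▸ hxD⟩
      exact ⟨C.erase j, mem_erase.2 ⟨ne_empty_of_mem hxC, mem_insert_self _ _⟩, hxC⟩
    · exact ⟨D, mem_erase.2 ⟨ne_empty_of_mem hxD, mem_insert_of_mem (mem_erase.2 ⟨hDC, hD⟩)⟩,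
        hxD⟩
  · refine Set.PairwiseDisjoint.subset ?_ (coe_subset.2 (erase_subset ∅ _))
    rw [coe_insert]
    refine (hdisj.subset (coe_subset.2 (erase_subset C σ))).insert fun D hD _ => ?_
    obtain ⟨hDC, hD⟩ := mem_erase.1 hD
    exact (h.disjoint hC hD (Ne.symm hDC)).mono_left (erase_subset j C)

lemma erase_blockOf_mem_partRemove (h : IsPartition (insert j M) σ) :
    (blockOf σ j).erase j ∈ insert ∅ (partRemove σ {j}) := by
  rw [partRemove_eq h]
  by_cases h0 : (blockOf σ j).erase j = ∅
  · rw [h0]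
    exact mem_insert_self _ _
  · exact mem_insert_of_mem (mem_erase.2 ⟨h0, mem_insert_self _ _⟩)

lemma addToBlock_partRemove (h : IsPartition (insert j M) σ) :
    addToBlock (partRemove σ {j}) j ((blockOf σ j).erase j) = σ := by
  obtain ⟨hC, hjC⟩ := blockOf_mem_and_mem h (mem_insert_self j M)
  set C := blockOf σ j
  have hCj : C.erase j ∉ σ.erase C := by
    intro hCj
    obtain ⟨x, hx⟩ := nonempty_iff_ne_empty.2 fun h0 => h.2.1 (h0 ▸ mem_of_mem_erase hCj)
    exact (mem_erase.1 hCj).1 (h.eq_of_mem (mem_of_mem_erase hCj) hC hx (mem_of_mem_erase hx))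
  rw [partRemove_eq h, addToBlock, insert_erase hjC, erase_right_comm, erase_insert_eq_erase,
    erase_eq_of_notMem hCj, erase_eq_of_notMem fun h0 => h.2.1 (mem_of_mem_erase h0),
    insert_erase hC]

-- Seating `j` alone is `addToBlock π j ∅`, so `insert ∅ π` lists every place `j` can take.
lemma sum_partitionsOf_insert {β : Type*} [AddCommMonoid β] (hjM : j ∉ M)
    (g : Finset (Finset ℕ) → β) :
    ∑ σ ∈ partitionsOf (insert j M), g σ
      = ∑ π ∈ partitionsOf M, ∑ B ∈ insert ∅ π, g (addToBlock π j B) := by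
  rw [sum_sigma']
  symm
  refine sum_nbij' (fun p => addToBlock p.1 j p.2)
    (fun σ => ⟨partRemove σ {j}, (blockOf σ j).erase j⟩) ?_ ?_ ?_ ?_ fun _ _ => rfl
  · rintro ⟨π, B⟩ hp
    obtain ⟨hπ, hB⟩ := mem_sigma.1 hp
    exact mem_partitionsOf.2 (isPartition_addToBlock hjM (mem_partitionsOf.1 hπ) hB)
  · intro σ hσ
    have h := mem_partitionsOf.1 hσ
    exact mem_sigma.2 ⟨mem_partitionsOf.2 (isPartition_partRemove hjM h),
      erase_blockOf_mem_partRemove h⟩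
  · rintro ⟨π, B⟩ hp
    obtain ⟨hπ, hB⟩ := mem_sigma.1 hp
    have h := mem_partitionsOf.1 hπ
    have hjB : j ∉ B := fun hjB => hjM (h.subset_of_mem_insert_empty hB hjB)
    simp only [partRemove_addToBlock hjM h hB, blockOf_addToBlock hjM h hB, erase_insert hjB]
  · intro σ hσ
    exact addToBlock_partRemove (mem_partitionsOf.1 hσ)

end Partitions

section Ewens

variable {M : Finset ℕ} {π : Finset (Finset ℕ)} {B : Finset ℕ} {j : ℕ}

lemma pstar_insert_singleton (hjM : j ∉ M) (h : IsPartition M π) :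
    pstar (insert j M) (insert {j} π) = pstar M π / ((M.card : ℝ) + 1) := by
  have hj : ({j} : Finset ℕ) ∉ π := fun hj => hjM (h.1 _ hj (mem_singleton_self j))
  rw [pstar, pstar, prod_insert hj, card_insert_of_notMem hjM, Nat.factorial_succ, card_singleton,
    Nat.sub_self, Nat.factorial_zero, Nat.cast_one, one_mul, Nat.cast_mul, Nat.cast_succ, div_div,
    mul_comm]

lemma pstar_addToBlock (hjM : j ∉ M) (h : IsPartition M π) (hB : B ∈ π) :
    pstar (insert j M) (addToBlock π j B) = (B.card : ℝ) * pstar M π / ((M.card : ℝ) + 1) := by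
  have hjB : j ∉ B := fun hjB => hjM (h.1 B hB hjB)
  have hnew : insert j B ∉ π.erase B :=
    fun hc => hjM (h.1 _ (mem_of_mem_erase hc) (mem_insert_self j B))
  obtain ⟨b, hb⟩ : ∃ b, B.card = b + 1 :=
    Nat.exists_eq_add_one.2 (card_pos.2 (nonempty_iff_ne_empty.2 fun h0 => h.2.1 (h0 ▸ hB)))
  rw [pstar, pstar, addToBlock, prod_insert hnew, card_insert_of_notMem hjB,
    card_insert_of_notMem hjM, ← mul_prod_erase π _ hB, hb, Nat.add_sub_cancel, Nat.add_sub_cancel,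
    Nat.factorial_succ, Nat.factorial_succ]
  push_cast
  field_simp

lemma sum_pstar_insert (hjM : j ∉ M) (f : Finset (Finset ℕ) → ℝ) :
    ∑ σ ∈ partitionsOf (insert j M), pstar (insert j M) σ * f σ
      = ∑ π ∈ partitionsOf M, pstar M π * (((M.card : ℝ) + 1)⁻¹ *
          (f (insert {j} π) + ∑ x ∈ M, f (addToBlock π j (blockOf π x)))) := by
  rw [sum_partitionsOf_insert hjM]
  refine sum_congr rfl fun π hπ => ?_
  have h := mem_partitionsOf.1 hπ
  rw [sum_insert h.2.1, addToBlock_empty h.2.1, pstar_insert_singleton hjM h,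
    sum_blockOf h fun B => f (addToBlock π j B),
    sum_congr rfl fun B hB => by rw [pstar_addToBlock hjM h hB]]
  simp only [nsmul_eq_mul, mul_add, mul_sum]
  congr 1
  · ring
  · exact sum_congr rfl fun _ _ => by ring

lemma avg_restrict1 (w : Game) {N S : Finset ℕ} (hj : j ∈ N) (hS : S ⊆ N.erase j) :
    avg (N.erase j) (restrict1 N w j) S = avg N w S := by
  have hjNS : j ∈ N \ S := mem_sdiff.2 ⟨hj, fun hjS => notMem_erase j N (hS hjS)⟩
  have hcard : (N.card : ℝ) - S.card = (((N \ S).erase j).card : ℝ) + 1 := by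
    rw [← Nat.cast_sub (card_le_card (hS.trans (erase_subset j N))),
      ← card_sdiff_of_subset (hS.trans (erase_subset j N)), ← card_erase_add_one hjNS]
    push_cast
    ring
  rw [avg, avg, erase_sdiff_comm]
  conv_rhs => rw [← insert_erase hjNS, sum_pstar_insert (notMem_erase j _)]
  refine sum_congr rfl fun π _ => ?_
  rw [restrict1, hcard]

end Ewens

section Shapley

noncomputable def shapleyWeight (n s : ℕ) : ℝ :=
  (s.factorial : ℝ) * ((n - s - 1).factorial : ℝ) / (n.factorial : ℝ)

lemma shapley_eq_sum_shapleyWeight (N : Finset ℕ) (v : TUGame) (i : ℕ) :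
    shapley N v i
      = ∑ S ∈ (N.erase i).powerset, shapleyWeight N.card S.card * (v (insert i S) - v S) :=
  rfl

lemma shapleyWeight_sub (t c : ℕ) :
    shapleyWeight (t + c + 2) t - shapleyWeight (t + c + 1) t
      = -shapleyWeight (t + c + 2) (t + 1) := by
  rw [shapleyWeight, shapleyWeight, shapleyWeight, show t + c + 2 - t - 1 = c + 1 by omega,
    show t + c + 1 - t - 1 = c by omega, show t + c + 2 - (t + 1) - 1 = c by omega,
    show t + c + 2 = (t + c + 1) + 1 by rfl, Nat.factorial_succ (t + c + 1), Nat.factorial_succ c,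
    Nat.factorial_succ t]
  push_cast
  field_simp
  ring

lemma shapley_sub_shapley_erase (v : TUGame) {N : Finset ℕ} {i j : ℕ} (hi : i ∈ N) (hj : j ∈ N)
    (hij : i ≠ j) :
    shapley N v i - shapley (N.erase j) v i
      = ∑ T ∈ ((N.erase i).erase j).powerset, shapleyWeight N.card (T.card + 1) *
          (v (insert i (insert j T)) - v (insert j T) - v (insert i T) + v T) := by
  have hjNi : j ∈ N.erase i := mem_erase.2 ⟨hij.symm, hj⟩
  have hcard : ((N.erase i).erase j).card + 2 = N.card := by
    rw [← card_erase_add_one hi, ← card_erase_add_one hjNi]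
  rw [shapley_eq_sum_shapleyWeight, shapley_eq_sum_shapleyWeight, erase_right_comm,
    card_erase_of_mem hj]
  set A := (N.erase i).erase j
  have hjA : j ∉ A := notMem_erase j _
  rw [← insert_erase hjNi, sum_powerset_insert hjA, add_sub_right_comm,
    ← sum_sub_distrib, ← sum_add_distrib]
  refine sum_congr rfl fun T hT => ?_
  rw [card_insert_of_notMem fun hjT => hjA (mem_powerset.1 hT hjT)]
  have hT := card_le_card (mem_powerset.1 hT)
  obtain ⟨c, hc⟩ : ∃ c, N.card = T.card + c + 2 := ⟨N.card - T.card - 2, by omega⟩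
  rw [hc, show T.card + c + 2 - 1 = T.card + c + 1 by omega]
  linear_combination (v (insert i T) - v T) * shapleyWeight_sub T.card c

lemma shapley_balanced_contributions (v : TUGame) {N : Finset ℕ} {i j : ℕ} (hi : i ∈ N)
    (hj : j ∈ N) :
    shapley N v i - shapley (N.erase j) v i = shapley N v j - shapley (N.erase i) v j := by
  rcases eq_or_ne i j with rfl | hij
  · rfl
  rw [shapley_sub_shapley_erase v hi hj hij, shapley_sub_shapley_erase v hj hi hij.symm,
    erase_right_comm]
  refine sum_congr rfl fun T _ => ?_
  rw [insert_comm]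
  ring

lemma shapley_congr {N : Finset ℕ} {v v' : TUGame} (h : ∀ S ⊆ N, v S = v' S) {i : ℕ}
    (hi : i ∈ N) : shapley N v i = shapley N v' i := by
  refine sum_congr rfl fun S hS => ?_
  have hSN : S ⊆ N := (mem_powerset.1 hS).trans (erase_subset i N)
  rw [h (insert i S) (insert_subset hi hSN), h S hSN]

end Shapley

lemma MPW_restrict1 (w : Game) {N : Finset ℕ} {i j : ℕ} (hj : j ∈ N) (hi : i ∈ N.erase j) :
    MPW (N.erase j) (restrict1 N w j) i = shapley (N.erase j) (avg N w) i :=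
  shapley_congr (fun _ hS => avg_restrict1 w hj hS) hi

end TUX

open TUX in
theorem MPW_balanced_contributions_general (N : Finset ℕ) (w : Game)
    (i j : ℕ) (hi : i ∈ N) (hj : j ∈ N) :
    MPW N w i - MPW (N.erase j) (restrict1 N w j) i
      = MPW N w j - MPW (N.erase i) (restrict1 N w i) j := by
  rcases eq_or_ne i j with rfl | hij
  · rfl
  rw [MPW_restrict1 w hj (mem_erase.2 ⟨hij, hi⟩), MPW_restrict1 w hi (mem_erase.2 ⟨hij.symm, hj⟩)]
  exact shapley_balanced_contributions (avg N w) hi hj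

open TUX in
/-- The MPW solution satisfies balanced contributions. -/
theorem MPW_balanced_contributions (N : Finset ℕ) (w : Game) (hw : IsTUX w)
    (i j : ℕ) (hi : i ∈ N) (hj : j ∈ N) :
    MPW N w i - MPW (N.erase j) (restrict1 N w j) i
      = MPW N w j - MPW (N.erase i) (restrict1 N w i) j :=
  MPW_balanced_contributions_general N w i j hi hj
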